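/- arXiv:math/0702811 — 3 statements merged into one kernel-verified Lean document; each statement's English description precedes it below -/
import Mathlib

section
/- Let μ and ν be partitions of n. If μ is strictly smaller than ν in the dominance order (i.e. for all i, μ₁+⋯+μᵢ ≤ ν₁+⋯+νᵢ, with strict inequality for at least one i, and Σμᵢ = Σνᵢ = n), then Σᵢ μᵢ² < Σᵢ νᵢ². -/
private lemma abel_aux (D c : ℕ → ℤ) (M : ℕ) :
    ∑ i ∈ Finset.range M, (D (i+1) - D i) * c i
      = D M * c M - D 0 * c 0 - ∑ i ∈ Finset.range M, D (i+1) * (c (i+1) - c i) := by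
  induction M with
  | zero => simp
  | succ M ih =>
      rw [Finset.sum_range_succ, ih, Finset.sum_range_succ]; ring

/-- If `μ` and `ν` are partitions of `n` (weakly decreasing sequences of nonnegative
integers, supported in `Finset.range N`, summing to `n`) and `μ` is strictly smaller
than `ν` in the dominance order, then `Σᵢ μᵢ² < Σᵢ νᵢ²`. -/
theorem sum_sq_lt_of_dominance_lt (n N : ℕ) (μ ν : ℕ → ℕ)
    (hμanti : Antitone μ) (hνanti : Antitone ν)
    (hμ0 : ∀ i, N ≤ i → μ i = 0) (hν0 : ∀ i, N ≤ i → ν i = 0)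
    (hμsum : ∑ i ∈ Finset.range N, μ i = n)
    (hνsum : ∑ i ∈ Finset.range N, ν i = n)
    (hdom : ∀ i, ∑ j ∈ Finset.range i, μ j ≤ ∑ j ∈ Finset.range i, ν j)
    (hstrict : ∃ i, ∑ j ∈ Finset.range i, μ j < ∑ j ∈ Finset.range i, ν j) :
    ∑ i ∈ Finset.range N, (μ i) ^ 2 < ∑ i ∈ Finset.range N, (ν i) ^ 2 := by
  set D : ℕ → ℤ := fun i =>
    (∑ j ∈ Finset.range i, (ν j : ℤ)) - ∑ j ∈ Finset.range i, (μ j : ℤ) with hD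
  set c : ℕ → ℤ := fun i => (μ i : ℤ) + (ν i : ℤ) with hc
  -- basic facts about D
  have hD0 : D 0 = 0 := by simp [hD]
  have hstep : ∀ i, D (i+1) - D i = (ν i : ℤ) - (μ i : ℤ) := by
    intro i; simp [hD, Finset.sum_range_succ]; ring
  have hDnn : ∀ i, 0 ≤ D i := by
    intro i
    have := hdom i
    have h1 : ((∑ j ∈ Finset.range i, μ j : ℕ) : ℤ) ≤ ((∑ j ∈ Finset.range i, ν j : ℕ) : ℤ) := by
      exact_mod_cast this
    push_cast at h1
    simp [hD]
    linarith
  have hμtail : ∀ i, N ≤ i → ∑ j ∈ Finset.range i, μ j = n := by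
    intro i hi
    rw [← hμsum]
    exact (Finset.sum_subset (Finset.range_subset_range.2 hi)
      (fun x _ hx => hμ0 x (le_of_not_gt (fun h => hx (Finset.mem_range.2 h))))).symm
  have hνtail : ∀ i, N ≤ i → ∑ j ∈ Finset.range i, ν j = n := by
    intro i hi
    rw [← hνsum]
    exact (Finset.sum_subset (Finset.range_subset_range.2 hi)
      (fun x _ hx => hν0 x (le_of_not_gt (fun h => hx (Finset.mem_range.2 h))))).symm
  have hDN : ∀ i, N ≤ i → D i = 0 := by
    intro i hi
    have h1 : (∑ j ∈ Finset.range i, (μ j : ℤ)) = (n : ℤ) := by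
      rw [← hμtail i hi]; push_cast; ring
    have h2 : (∑ j ∈ Finset.range i, (ν j : ℤ)) = (n : ℤ) := by
      rw [← hνtail i hi]; push_cast; ring
    simp [hD, h1, h2]
  -- antitone of c
  have hcmono : ∀ i, c (i+1) ≤ c i := by
    intro i
    have h1 := hμanti (Nat.le_succ i)
    have h2 := hνanti (Nat.le_succ i)
    simp [hc]
    exact add_le_add (by exact_mod_cast h1) (by exact_mod_cast h2)
  -- key identity
  have key : (∑ i ∈ Finset.range N, (ν i : ℤ)^2) - ∑ i ∈ Finset.range N, (μ i : ℤ)^2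
      = ∑ i ∈ Finset.range N, (c i - c (i+1)) * D (i+1) := by
    have h1 : ∀ i, (ν i : ℤ)^2 - (μ i : ℤ)^2 = (D (i+1) - D i) * c i := by
      intro i
      rw [hstep i]
      simp [hc]; ring
    calc (∑ i ∈ Finset.range N, (ν i : ℤ)^2) - ∑ i ∈ Finset.range N, (μ i : ℤ)^2
        = ∑ i ∈ Finset.range N, ((ν i : ℤ)^2 - (μ i : ℤ)^2) := by
          rw [Finset.sum_sub_distrib]
      _ = ∑ i ∈ Finset.range N, (D (i+1) - D i) * c i := by
          exact Finset.sum_congr rfl (fun i _ => h1 i)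
      _ = D N * c N - D 0 * c 0 - ∑ i ∈ Finset.range N, D (i+1) * (c (i+1) - c i) :=
          abel_aux D c N
      _ = ∑ i ∈ Finset.range N, (c i - c (i+1)) * D (i+1) := by
          rw [hDN N le_rfl, hD0]
          rw [show (0 : ℤ) * c N - 0 * c 0 - ∑ i ∈ Finset.range N, D (i+1) * (c (i+1) - c i)
              = ∑ i ∈ Finset.range N, -(D (i+1) * (c (i+1) - c i)) by
            rw [Finset.sum_neg_distrib]; ring]
          exact Finset.sum_congr rfl (fun i _ => by ring)
  -- termwise nonnegativity
  have htnn : ∀ i, 0 ≤ (c i - c (i+1)) * D (i+1) := by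
    intro i
    exact mul_nonneg (by linarith [hcmono i]) (hDnn (i+1))
  -- existence of a strictly positive term
  have hex : ∃ i ∈ Finset.range N, 0 < (c i - c (i+1)) * D (i+1) := by
    by_contra hcon
    push_neg at hcon
    have hzero : ∀ i, i < N → (c i - c (i+1)) * D (i+1) = 0 := by
      intro i hi
      exact le_antisymm (hcon i (Finset.mem_range.2 hi)) (htnn i)
    -- get a witness where D is positive
    obtain ⟨i0, hi0⟩ := hstrict
    have hDi0 : 0 < D i0 := by
      have h1 : ((∑ j ∈ Finset.range i0, μ j : ℕ) : ℤ) < ((∑ j ∈ Finset.range i0, ν j : ℕ) : ℤ) := by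
        exact_mod_cast hi0
      push_cast at h1
      simp [hD]
      linarith
    have hi0N : i0 < N := by
      by_contra h
      rw [hDN i0 (le_of_not_gt h)] at hDi0
      exact lt_irrefl 0 hDi0
    have hi0pos : 0 < i0 := by
      rcases Nat.eq_zero_or_pos i0 with h | h
      · rw [h, hD0] at hDi0; exact absurd hDi0 (lt_irrefl 0)
      · exact h
    -- maximal m with D (m+1) > 0
    set P : ℕ → Prop := fun k => 0 < D (k+1) with hP
    have : DecidablePred P := fun k => Int.decLt 0 (D (k+1))
    set m : ℕ := Nat.findGreatest P N with hm
    have hPi0 : P (i0 - 1) := by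
      simp only [hP]
      have : i0 - 1 + 1 = i0 := Nat.succ_pred_eq_of_pos hi0pos
      rw [this]; exact hDi0
    have hPm : P m := Nat.findGreatest_spec (by omega : i0 - 1 ≤ N) hPi0
    have hDm1 : 0 < D (m + 1) := hPm
    have hmN : m + 1 < N := by
      by_contra h
      rw [hDN (m+1) (by omega)] at hDm1
      exact lt_irrefl 0 hDm1
    have hDm2 : D (m + 2) = 0 := by
      rcases le_or_gt (m + 2) N with h | h
      · have hng : ¬ P (m + 1) :=
          Nat.findGreatest_is_greatest (Nat.lt_succ_self m) (by omega)
        simp only [hP] at hng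
        exact le_antisymm (le_of_not_gt hng) (hDnn (m+2))
      · exact hDN (m+2) (by omega)
    -- downward induction
    have hall : ∀ k, k ≤ m + 1 → 0 < D (m + 1 - k) ∧ (ν (m + 1 - k) : ℤ) < μ (m + 1 - k) := by
      intro k
      induction k with
      | zero =>
          intro _
          refine ⟨by simpa using hDm1, ?_⟩
          have := hstep (m + 1)
          simp only [Nat.sub_zero]
          have : (ν (m+1) : ℤ) - μ (m+1) = D (m+2) - D (m+1) := (hstep (m+1)).symm
          rw [hDm2] at this
          linarith
      | succ k ih =>
          intro hk
          have hk' : k ≤ m + 1 := by omega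
          obtain ⟨ihD, ihlt⟩ := ih hk'
          set j : ℕ := m + 1 - (k + 1) with hj
          have hj1 : j + 1 = m + 1 - k := by omega
          have hjN : j < N := by omega
          have hDj1 : 0 < D (j + 1) := by rw [hj1]; exact ihD
          have hcj : c j = c (j + 1) := by
            have h0 := hzero j hjN
            rcases mul_eq_zero.1 h0 with h | h
            · linarith
            · rw [h] at hDj1; exact absurd hDj1 (lt_irrefl 0)
          -- antitone gives componentwise equality
          have hμle : μ (j+1) ≤ μ j := hμanti (Nat.le_succ j)
          have hνle : ν (j+1) ≤ ν j := hνanti (Nat.le_succ j)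
          have hμeq : μ j = μ (j+1) := by
            simp only [hc] at hcj
            have h1 : ((μ j : ℤ) + ν j) = (μ (j+1) : ℤ) + ν (j+1) := hcj
            have h2 : (μ (j+1) : ℤ) ≤ μ j := by exact_mod_cast hμle
            have h3 : (ν (j+1) : ℤ) ≤ ν j := by exact_mod_cast hνle
            have : (μ j : ℤ) = μ (j+1) := by linarith
            exact_mod_cast this
          have hνeq : ν j = ν (j+1) := by
            simp only [hc] at hcj
            have h1 : ((μ j : ℤ) + ν j) = (μ (j+1) : ℤ) + ν (j+1) := hcj
            have h2 : (μ (j+1) : ℤ) ≤ μ j := by exact_mod_cast hμle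
            have h3 : (ν (j+1) : ℤ) ≤ ν j := by exact_mod_cast hνle
            have : (ν j : ℤ) = ν (j+1) := by linarith
            exact_mod_cast this
          have hlt' : (ν j : ℤ) < μ j := by
            rw [hμeq, hνeq]
            rw [hj1]; exact ihlt
          refine ⟨?_, hlt'⟩
          have := hstep j
          have : D j = D (j+1) - ((ν j : ℤ) - μ j) := by linarith [hstep j]
          rw [this]
          linarith
    have hfinal := hall (m + 1) le_rfl
    rw [Nat.sub_self, hD0] at hfinal
    exact absurd hfinal.1 (lt_irrefl 0)
  -- conclude
  have hpos : 0 < ∑ i ∈ Finset.range N, (c i - c (i+1)) * D (i+1) := by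
    obtain ⟨i, hi, hipos⟩ := hex
    exact Finset.sum_pos' (fun j _ => htnn j) ⟨i, hi, hipos⟩
  have hZ : (∑ i ∈ Finset.range N, (μ i : ℤ)^2) < ∑ i ∈ Finset.range N, (ν i : ℤ)^2 := by
    linarith [key]
  have := hZ
  push_cast at this
  exact_mod_cast this
end

section
/- Consider the permutation specialization: the ℤ[v,v⁻¹]-module ℳ with basis {M_x : x ∈ (W'\W)_short} and right action of generators H̲_s given by M_x·H̲_s = M_{xs} + v·M_x if xs ∈ (W'\W)_short, xs > x; M_x·H̲_s = M_{xs} + v⁻¹·M_x if xs ∈ (W'\W)_short, xs < x; and M_x·H̲_s = (v+v⁻¹)·M_x if xs ∉ (W'\W)_short. Then the action of each H̲_s satisfies the quadratic relation (M·H̲_s)·H̲_s = (v+v⁻¹)·(M·H̲_s) for every M ∈ ℳ. -/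
open LaurentPolynomial

/-- The standard parabolic subgroup generated by `S' ⊆ S`. -/
def CoxeterSystem.parabolic {B W : Type*} [Group W] {M : CoxeterMatrix B}
    (cs : CoxeterSystem M W) (S' : Set B) : Subgroup W :=
  Subgroup.closure (cs.simple '' S')

/-- `x` is a shortest representative of its right coset `W'x`. -/
def CoxeterSystem.IsMinRep {B W : Type*} [Group W] {M : CoxeterMatrix B}
    (cs : CoxeterSystem M W) (S' : Set B) (x : W) : Prop :=
  ∀ u ∈ cs.parabolic S', cs.length x ≤ cs.length (u * x)

/-- The permutation parabolic module `ℳ` with basis `{M_x : x ∈ (W'\W)_short}` and action of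
the Kazhdan–Lusztig generators `H̲_s` given by the stated formulas satisfies the
quadratic relation `(M·H̲_s)·H̲_s = (v+v⁻¹)·(M·H̲_s)` for every `M ∈ ℳ`. -/
theorem permutation_parabolic_quadratic {B W : Type*} [Group W] (M : CoxeterMatrix B)
    (cs : CoxeterSystem M W) (S' : Set B)
    {ℳ : Type*} [AddCommGroup ℳ] [Module (LaurentPolynomial ℤ) ℳ]
    (Mb : Module.Basis {x : W // cs.IsMinRep S' x} (LaurentPolynomial ℤ) ℳ)
    (act : B → (ℳ →ₗ[LaurentPolynomial ℤ] ℳ))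
    (h1 : ∀ (x y : {x : W // cs.IsMinRep S' x}) (s : B),
      (y : W) = (x : W) * cs.simple s →
      cs.length (y : W) = cs.length (x : W) + 1 →
      act s (Mb x) = Mb y + (T 1 : LaurentPolynomial ℤ) • Mb x)
    (h2 : ∀ (x y : {x : W // cs.IsMinRep S' x}) (s : B),
      (y : W) = (x : W) * cs.simple s →
      cs.length (x : W) = cs.length (y : W) + 1 →
      act s (Mb x) = Mb y + (T (-1) : LaurentPolynomial ℤ) • Mb x)
    (h3 : ∀ (x : {x : W // cs.IsMinRep S' x}) (s : B),
      ¬ cs.IsMinRep S' ((x : W) * cs.simple s) →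
      act s (Mb x) = ((T 1 + T (-1) : LaurentPolynomial ℤ)) • Mb x) :
    ∀ (m : ℳ) (s : B),
      act s (act s m) = ((T 1 + T (-1) : LaurentPolynomial ℤ)) • act s m := by
  intro m s
  have hab : (T 1 : LaurentPolynomial ℤ) * T (-1) = 1 := by
    rw [← T_add]; norm_num
  have key : ∀ x, act s (act s (Mb x)) = ((T 1 + T (-1) : LaurentPolynomial ℤ)) • act s (Mb x) := by
    intro x
    by_cases h : cs.IsMinRep S' ((x : W) * cs.simple s)
    · set y : {x : W // cs.IsMinRep S' x} := ⟨(x : W) * cs.simple s, h⟩ with hy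
      have hyx : (x : W) = (y : W) * cs.simple s := by
        simp [hy, mul_assoc, cs.simple_mul_simple_self]
      rcases cs.length_mul_simple (x : W) s with hl | hl
      · have e1 := h1 x y s rfl hl
        have e2 := h2 y x s hyx hl
        rw [e1, map_add, map_smul, e2, e1]
        match_scalars
        · linear_combination -hab
        · ring
      · have e1 := h2 x y s rfl hl.symm
        have e2 := h1 y x s hyx hl.symm
        rw [e1, map_add, map_smul, e2, e1]
        match_scalars
        · linear_combination -hab
        · ring
    · have e := h3 x s h
      rw [e, map_smul, e]
  have hmap : (act s).comp (act s) = (T 1 + T (-1) : LaurentPolynomial ℤ) • act s :=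
    Module.Basis.ext Mb (fun x => by simpa using key x)
  calc act s (act s m) = ((act s).comp (act s)) m := rfl
    _ = ((T 1 + T (-1) : LaurentPolynomial ℤ) • act s) m := by rw [hmap]
    _ = _ := rfl
end

section
/- Define the symmetric bilinear form on 𝒮(𝐑')⊗_{𝐇'}𝐇 with values in ℤ[v,v⁻¹] by (m ⊗ H_x , n ⊗ H_y) = δ_{x,y}·⟨m,n⟩ for x, y minimal-length coset representatives in (W'\W)_short and m, n ∈ 𝒮(𝐑'). If ⟨·,·⟩ is a symmetric, non-degenerate, 𝐇'-invariant bilinear form on 𝒮(𝐑'), then (·,·) is a symmetric, non-degenerate, 𝐇-invariant bilinear form, i.e. (a·h, b) = (a, b·h) for all a, b in the induced module and h ∈ 𝐇. -/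
open LaurentPolynomial

namespace CoxAux

open CoxeterSystem List
open scoped Classical

variable {B W : Type*} [Group W] {M : CoxeterMatrix B} (cs : CoxeterSystem M W)

local prefix:100 "σ" => cs.simple
local prefix:100 "πw" => cs.wordProd
local prefix:100 "ℓ" => cs.length

/-- Count of `t` in the right inversion sequence of `ω`. -/
noncomputable def invCount (ω : List B) (t : W) : ℕ :=
  Multiset.count t (cs.rightInvSeq ω : Multiset W)

lemma invCount_nil (t : W) : invCount cs [] t = 0 := rfl

lemma invCount_cons (i : B) (ω : List B) (t : W) :
    invCount cs (i :: ω) t =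
      invCount cs ω t + if t = (πw ω)⁻¹ * σ i * πw ω then 1 else 0 := by
  have hris : cs.rightInvSeq (i :: ω) = ((πw ω)⁻¹ * σ i * πw ω) :: cs.rightInvSeq ω := rfl
  unfold invCount
  rw [hris, ← Multiset.cons_coe, Multiset.count_cons]

/-- The Tits sign action of a generator on `W × ℤˣ`. -/
noncomputable def etaFun (i : B) (p : W × ℤˣ) : W × ℤˣ :=
  (σ i * p.1 * σ i, if p.1 = σ i then -p.2 else p.2)

lemma etaFun_invol (i : B) : Function.Involutive (etaFun cs i) := by
  rintro ⟨t, ε⟩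
  unfold etaFun
  have h1 : σ i * (σ i * t * σ i) * σ i = t := by
    simp [mul_assoc, cs.simple_mul_simple_cancel_left]
  have h2 : (σ i * t * σ i = σ i) ↔ (t = σ i) := by
    constructor
    · intro h
      have := congrArg (fun z => σ i * z * σ i) h
      simpa [mul_assoc, cs.simple_mul_simple_cancel_left, cs.simple_mul_simple_self] using this
    · rintro rfl; simp [cs.simple_mul_simple_self]
  by_cases h : t = σ i
  · simp [h1, h2, h]
  · simp [h1, h2, h]

/-- The Tits sign action of a generator, as a permutation. -/
noncomputable def eta (i : B) : Equiv.Perm (W × ℤˣ) := (etaFun_invol cs i).toPerm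

lemma eta_apply (i : B) (p : W × ℤˣ) : eta cs i p = etaFun cs i p := rfl

lemma prod_eta_apply (ω : List B) (p : W × ℤˣ) :
    (List.map (eta cs) ω).prod p =
      (πw ω * p.1 * (πw ω)⁻¹, (-1 : ℤˣ) ^ (invCount cs ω p.1) * p.2) := by
  induction ω with
  | nil => simp [invCount_nil]
  | cons i ω ih =>
    rw [List.map_cons, List.prod_cons, Equiv.Perm.mul_apply, ih, eta_apply]
    unfold etaFun
    have hcond : (πw ω * p.1 * (πw ω)⁻¹ = σ i) ↔ (p.1 = (πw ω)⁻¹ * σ i * πw ω) := by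
      constructor
      · intro h; rw [← h]; group
      · intro h; rw [h]; group
    refine Prod.ext ?_ ?_
    · show σ i * (πw ω * p.1 * (πw ω)⁻¹) * σ i = πw (i :: ω) * p.1 * (πw (i :: ω))⁻¹
      rw [cs.wordProd_cons]
      simp [mul_assoc, cs.inv_simple]
    · show (if πw ω * p.1 * (πw ω)⁻¹ = σ i then -((-1:ℤˣ)^(invCount cs ω p.1) * p.2)
          else (-1:ℤˣ)^(invCount cs ω p.1) * p.2) = (-1:ℤˣ)^(invCount cs (i :: ω) p.1) * p.2
      rw [invCount_cons]
      by_cases h : p.1 = (πw ω)⁻¹ * σ i * πw ω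
      · rw [if_pos (hcond.mpr h), if_pos h, pow_succ]
        simp [mul_assoc]
      · rw [if_neg (fun hc => h (hcond.mp hc)), if_neg h]
        simp

/-- `[i, i', i, i', ...]` with `m` pairs. -/
def pairWord (i i' : B) : ℕ → List B
  | 0 => []
  | m + 1 => pairWord i i' m ++ [i, i']

lemma wordProd_pairWord (i i' : B) (m : ℕ) :
    πw (pairWord i i' m) = (σ i * σ i') ^ m := by
  induction m with
  | zero => simp [pairWord]
  | succ m ih =>
    rw [pairWord, cs.wordProd_append, ih, pow_succ]
    congr 1
    rw [cs.wordProd_cons, cs.wordProd_singleton]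

lemma rightInvSeq_append (ω₁ ω₂ : List B) :
    cs.rightInvSeq (ω₁ ++ ω₂) =
      ((cs.rightInvSeq ω₁).map fun t => (πw ω₂)⁻¹ * t * πw ω₂) ++ cs.rightInvSeq ω₂ := by
  induction ω₁ with
  | nil => simp [rightInvSeq]
  | cons i ω₁ ih =>
    show ((πw (ω₁ ++ ω₂))⁻¹ * σ i * πw (ω₁ ++ ω₂)) :: cs.rightInvSeq (ω₁ ++ ω₂) = _
    rw [ih]
    show _ = ((πw ω₂)⁻¹ * ((πw ω₁)⁻¹ * σ i * πw ω₁) * πw ω₂) :: _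
    rw [cs.wordProd_append]
    simp [mul_assoc]

lemma rev_map_range_succ_succ {α : Type*} (g : ℕ → α) (n : ℕ) :
    (List.map g (List.range (n + 2))).reverse =
      (List.map (fun j => g (j + 2)) (List.range n)).reverse ++ [g 1, g 0] := by
  induction n with
  | zero => simp [List.range_succ]
  | succ n ih =>
    have h1 : n + 1 + 2 = (n + 2) + 1 := by omega
    rw [h1, List.range_succ, List.map_append, List.reverse_append, ih,
      List.range_succ, List.map_append, List.reverse_append]
    simp

lemma rightInvSeq_pairWord (i i' : B) (m : ℕ) :
    cs.rightInvSeq (pairWord i i' m) =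
      (((List.range (2 * m)).map fun j => ((σ i * σ i')⁻¹) ^ j * σ i')).reverse := by
  induction m with
  | zero => simp [pairWord]
  | succ m ih =>
    rw [pairWord, rightInvSeq_append, ih]
    have hπ : πw [i, i'] = σ i * σ i' := by
      rw [cs.wordProd_cons, cs.wordProd_singleton]
    have hris2 : cs.rightInvSeq [i, i'] =
        [((σ i * σ i')⁻¹) ^ 1 * σ i', ((σ i * σ i')⁻¹) ^ 0 * σ i'] := by
      show ((πw [i'])⁻¹ * σ i * πw [i']) :: ((πw ([] : List B))⁻¹ * σ i' * πw ([] : List B)) :: [] = _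
      rw [cs.wordProd_singleton, cs.wordProd_nil]
      simp [cs.inv_simple, mul_assoc]
    have hkey : σ i' * σ i * σ i' = (σ i * σ i')⁻¹ * σ i' := by
      rw [mul_inv_rev, cs.inv_simple, cs.inv_simple]
    have hconj : ∀ j : ℕ, (πw [i, i'])⁻¹ * (((σ i * σ i')⁻¹) ^ j * σ i') * πw [i, i'] =
        ((σ i * σ i')⁻¹) ^ (j + 2) * σ i' := by
      intro j
      rw [hπ]
      have e1 : ((σ i * σ i')⁻¹) ^ (j + 2) =
          (σ i * σ i')⁻¹ * ((σ i * σ i')⁻¹) ^ j * (σ i * σ i')⁻¹ := by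
        rw [pow_succ, ← pow_succ']
      rw [e1]
      simp only [mul_assoc]
      congr 2
      rw [← mul_assoc, hkey]
    have h2 : 2 * (m + 1) = 2 * m + 2 := by omega
    rw [h2, rev_map_range_succ_succ, hris2, List.map_reverse, List.map_map]
    congr 2
    apply List.map_congr_left
    intro j _
    exact hconj j

lemma invCount_pairWord_even (i i' : B) (t : W) :
    invCount cs (pairWord i i' (M i i')) t % 2 = 0 := by
  set g : ℕ → W := fun j => ((σ i * σ i')⁻¹) ^ j * σ i' with hg
  have hper : ∀ j, g (M i i' + j) = g j := by
    intro j
    have h1 : ((σ i * σ i')⁻¹) ^ (M i i') = 1 := by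
      rw [inv_pow, cs.simple_mul_simple_pow, inv_one]
    rw [hg]
    simp only [pow_add, h1, one_mul]
  unfold invCount
  rw [rightInvSeq_pairWord, Multiset.coe_reverse]
  have h2 : 2 * M i i' = M i i' + M i i' := by omega
  rw [h2, List.range_add, List.map_append, ← Multiset.coe_add, Multiset.count_add]
  have h3 : List.map g (List.map (fun x => M i i' + x) (List.range (M i i'))) =
      List.map g (List.range (M i i')) := by
    rw [List.map_map]
    apply List.map_congr_left
    intro j _
    exact hper j
  rw [h3, ← hg]
  omega
lemma prod_eta_pairWord (i i' : B) (m : ℕ) :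
    (List.map (eta cs) (pairWord i i' m)).prod = (eta cs i * eta cs i') ^ m := by
  induction m with
  | zero => simp [pairWord]
  | succ m ih =>
    rw [pairWord, List.map_append, List.prod_append, ih, pow_succ]
    simp

lemma eta_liftable : M.IsLiftable (eta cs) := by
  intro i i'
  refine Equiv.ext fun p => ?_
  have hp : ((eta cs i * eta cs i') ^ M i i') p =
      ((List.map (eta cs) (pairWord i i' (M i i'))).prod) p := by
    rw [prod_eta_pairWord]
  rw [hp, prod_eta_apply]
  have h1 : πw (pairWord i i' (M i i')) = 1 := by
    rw [wordProd_pairWord, cs.simple_mul_simple_pow]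
  have h2 : (-1 : ℤˣ) ^ (invCount cs (pairWord i i' (M i i')) p.1) = 1 := by
    rw [neg_one_pow_eq_one_iff_even (by decide), Nat.even_iff]
    exact invCount_pairWord_even cs i i' p.1
  rw [h1, h2]
  simp

/-- The Tits sign representation `W →* Perm (W × ℤˣ)`. -/
noncomputable def etaHom : W →* Equiv.Perm (W × ℤˣ) := cs.lift ⟨eta cs, eta_liftable cs⟩

lemma etaHom_wordProd (ω : List B) :
    etaHom cs (πw ω) = (List.map (eta cs) ω).prod := by
  unfold CoxeterSystem.wordProd
  rw [map_list_prod, List.map_map]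
  congr 1
  apply List.map_congr_left
  intro i _
  exact cs.lift_apply_simple (eta_liftable cs) i

/-- Key parity invariance: the parity of the number of occurrences of `t` in the right
inversion sequence depends only on the product of the word. -/
lemma invCount_parity {ω ω' : List B} (h : πw ω = πw ω') (t : W) :
    invCount cs ω t % 2 = invCount cs ω' t % 2 := by
  have h2 : (List.map (eta cs) ω).prod = (List.map (eta cs) ω').prod := by
    rw [← etaHom_wordProd, ← etaHom_wordProd, h]
  have h3 := congrArg (fun f : Equiv.Perm (W × ℤˣ) => (f (t, 1)).2) h2
  simp only [prod_eta_apply, mul_one] at h3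
  have h4 : ∀ n k : ℕ, (-1 : ℤˣ) ^ n = (-1 : ℤˣ) ^ k → n % 2 = k % 2 := by
    intro n k hnk
    rcases Nat.even_or_odd n with hn | hn <;> rcases Nat.even_or_odd k with hk | hk
    · rw [Nat.even_iff] at hn hk; omega
    · exfalso
      have h5 : (-1 : ℤˣ) ^ k = 1 := by
        rw [← hnk, neg_one_pow_eq_one_iff_even (by decide)]; exact hn
      rw [neg_one_pow_eq_one_iff_even (by decide)] at h5
      exact (Nat.not_even_iff_odd.mpr hk) h5
    · exfalso
      have h5 : (-1 : ℤˣ) ^ n = 1 := by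
        rw [hnk, neg_one_pow_eq_one_iff_even (by decide)]; exact hk
      rw [neg_one_pow_eq_one_iff_even (by decide)] at h5
      exact (Nat.not_even_iff_odd.mpr hn) h5
    · rw [Nat.odd_iff] at hn hk; omega
  exact h4 _ _ h3

lemma exchange_right {w : W} {i : B} (hw : ℓ (w * σ i) < ℓ w)
    {ω : List B} (hred : cs.IsReduced ω) (hπ : w = πw ω) :
    ∃ j < ω.length, w * σ i = πw (ω.eraseIdx j) := by
  have hmem : σ i ∈ cs.rightInvSeq ω := by
    by_contra hni
    have hc : invCount cs ω (σ i) = 0 := by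
      unfold invCount
      rw [Multiset.count_eq_zero]
      simpa using hni
    obtain ⟨ω', hred', hw'⟩ := cs.exists_reduced_word' (w * σ i)
    have hπ' : πw ω = πw (ω'.concat i) := by
      rw [List.concat_eq_append, cs.wordProd_append, ← hπ, ← hw', cs.wordProd_singleton,
        cs.simple_mul_simple_cancel_right]
    have hpar := invCount_parity cs hπ' (σ i)
    have hconcat : invCount cs (ω'.concat i) (σ i) = invCount cs ω' (σ i) + 1 := by
      unfold invCount
      rw [cs.rightInvSeq_concat, List.concat_eq_append, ← Multiset.coe_add,
        Multiset.count_add, ← Multiset.map_coe]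
      have hfix : (MulAut.conj (σ i)) (σ i) = σ i := by
        rw [MulAut.conj_apply]
        simp [cs.inv_simple, mul_assoc, cs.simple_mul_simple_self]
      have hinj : Function.Injective (MulAut.conj (σ i) : W → W) :=
        (MulAut.conj (σ i)).injective
      have hcnt := Multiset.count_map_eq_count' (⇑(MulAut.conj (σ i)))
        ((cs.rightInvSeq ω' : Multiset W)) hinj (σ i)
      rw [hfix] at hcnt
      rw [hcnt]
      simp
    rw [hc, hconcat] at hpar
    have hpos : 0 < invCount cs ω' (σ i) := by omega
    have hmem' : σ i ∈ cs.rightInvSeq ω' := by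
      unfold invCount at hpos
      rw [Multiset.count_pos] at hpos
      simpa using hpos
    obtain ⟨j, hj, hget⟩ := List.mem_iff_getElem.mp hmem'
    have hj' : j < ω'.length := by
      have := cs.length_rightInvSeq ω'
      omega
    have hgd : (cs.rightInvSeq ω').getD j 1 = σ i := by
      rw [List.getD_eq_getElem _ _ hj, hget]
    have heq := cs.wordProd_mul_getD_rightInvSeq ω' j
    rw [hgd, ← hw'] at heq
    have hww : w = πw (ω'.eraseIdx j) := by
      rw [← heq, cs.simple_mul_simple_cancel_right]
    have hlen : ℓ w ≤ (ω'.eraseIdx j).length := by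
      rw [hww]
      exact cs.length_wordProd_le _
    rw [List.length_eraseIdx, if_pos hj'] at hlen
    have hlred : ω'.length = ℓ (w * σ i) := by
      rw [hw']
      exact hred'.symm
    omega
  obtain ⟨j, hj, hget⟩ := List.mem_iff_getElem.mp hmem
  have hj' : j < ω.length := by
    have := cs.length_rightInvSeq ω
    omega
  have hgd : (cs.rightInvSeq ω).getD j 1 = σ i := by
    rw [List.getD_eq_getElem _ _ hj, hget]
  have heq := cs.wordProd_mul_getD_rightInvSeq ω j
  rw [hgd, ← hπ] at heq
  exact ⟨j, hj', heq⟩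

lemma invCountL_parity {ω ω' : List B} (h : πw ω = πw ω') (t : W) :
    Multiset.count t (cs.leftInvSeq ω : Multiset W) % 2 =
      Multiset.count t (cs.leftInvSeq ω' : Multiset W) % 2 := by
  have key : ∀ χ : List B,
      (cs.leftInvSeq χ : Multiset W) = (cs.rightInvSeq χ.reverse : Multiset W) := by
    intro χ
    have h1 := cs.rightInvSeq_reverse χ
    rw [h1, Multiset.coe_reverse]
  rw [key, key]
  have hrev : πw ω.reverse = πw ω'.reverse := by
    rw [cs.wordProd_reverse, cs.wordProd_reverse, h]
  exact invCount_parity cs hrev t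

lemma leftInvSeq_cons (i : B) (ω : List B) :
    cs.leftInvSeq (i :: ω) = σ i :: (cs.leftInvSeq ω).map (MulAut.conj (σ i)) := rfl

lemma exchange_left {w : W} {i : B} (hw : ℓ (σ i * w) < ℓ w)
    {ω : List B} (hred : cs.IsReduced ω) (hπ : w = πw ω) :
    ∃ j < ω.length, σ i * w = πw (ω.eraseIdx j) := by
  have hmem : σ i ∈ cs.leftInvSeq ω := by
    by_contra hni
    have hc : Multiset.count (σ i) (cs.leftInvSeq ω : Multiset W) = 0 := by
      rw [Multiset.count_eq_zero]
      simpa using hni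
    obtain ⟨ω', hred', hw'⟩ := cs.exists_reduced_word' (σ i * w)
    have hπ' : πw ω = πw (i :: ω') := by
      rw [cs.wordProd_cons, ← hπ, ← hw', cs.simple_mul_simple_cancel_left]
    have hpar := invCountL_parity cs hπ' (σ i)
    have hcons : Multiset.count (σ i) (cs.leftInvSeq (i :: ω') : Multiset W) =
        Multiset.count (σ i) (cs.leftInvSeq ω' : Multiset W) + 1 := by
      rw [leftInvSeq_cons, ← Multiset.cons_coe, Multiset.count_cons_self, ← Multiset.map_coe]
      have hfix : (MulAut.conj (σ i)) (σ i) = σ i := by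
        rw [MulAut.conj_apply]
        simp [cs.inv_simple, mul_assoc, cs.simple_mul_simple_self]
      have hinj : Function.Injective (MulAut.conj (σ i) : W → W) :=
        (MulAut.conj (σ i)).injective
      have hcnt := Multiset.count_map_eq_count' (⇑(MulAut.conj (σ i)))
        ((cs.leftInvSeq ω' : Multiset W)) hinj (σ i)
      rw [hfix] at hcnt
      rw [hcnt]
    rw [hc, hcons] at hpar
    have hpos : 0 < Multiset.count (σ i) (cs.leftInvSeq ω' : Multiset W) := by omega
    have hmem' : σ i ∈ cs.leftInvSeq ω' := by
      rw [Multiset.count_pos] at hpos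
      simpa using hpos
    obtain ⟨j, hj, hget⟩ := List.mem_iff_getElem.mp hmem'
    have hgd : (cs.leftInvSeq ω').getD j 1 = σ i := by
      rw [List.getD_eq_getElem _ _ hj, hget]
    have heq := cs.getD_leftInvSeq_mul_wordProd ω' j
    rw [hgd, ← hw'] at heq
    have hww : w = πw (ω'.eraseIdx j) := by
      rw [← heq, cs.simple_mul_simple_cancel_left]
    have hj' : j < ω'.length := by
      have := cs.length_leftInvSeq ω'
      omega
    have hlen : ℓ w ≤ (ω'.eraseIdx j).length := by
      rw [hww]
      exact cs.length_wordProd_le _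
    rw [List.length_eraseIdx, if_pos hj'] at hlen
    have hlred : ω'.length = ℓ (σ i * w) := by
      rw [hw']
      exact hred'.symm
    omega
  obtain ⟨j, hj, hget⟩ := List.mem_iff_getElem.mp hmem
  have hj' : j < ω.length := by
    have := cs.length_leftInvSeq ω
    omega
  have hgd : (cs.leftInvSeq ω).getD j 1 = σ i := by
    rw [List.getD_eq_getElem _ _ hj, hget]
  have heq := cs.getD_leftInvSeq_mul_wordProd ω j
  rw [hgd, ← hπ] at heq
  exact ⟨j, hj', heq⟩

lemma exists_reduced_subword (l : List B) :
    ∃ l' : List B, (∀ b ∈ l', b ∈ l) ∧ cs.IsReduced l' ∧ πw l' = πw l := by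
  suffices H : ∀ n (l : List B), l.length ≤ n →
      ∃ l' : List B, (∀ b ∈ l', b ∈ l) ∧ cs.IsReduced l' ∧ πw l' = πw l from
    H l.length l le_rfl
  intro n
  induction n with
  | zero =>
    intro l hl
    have : l = [] := List.eq_nil_of_length_eq_zero (by omega)
    subst this
    refine ⟨[], by simp, ?_, rfl⟩
    show ℓ (πw []) = _
    simp
  | succ n ih =>
    intro l hl
    by_cases hred : cs.IsReduced l
    · exact ⟨l, fun b hb => hb, hred, rfl⟩
    · have hlne : l ≠ [] := by
        intro h
        apply hred
        subst h
        show ℓ (πw []) = _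
        simp
      have hlpos : 0 < l.length := List.length_pos_iff.mpr hlne
      have hex : ∃ j, ¬ cs.IsReduced (l.take (j + 1)) := by
        refine ⟨l.length - 1, ?_⟩
        have h9 : l.length - 1 + 1 = l.length := by omega
        rw [h9, List.take_length]
        exact hred
      set j := Nat.find hex with hjdef
      have hj : ¬ cs.IsReduced (l.take (j + 1)) := Nat.find_spec hex
      have hjle : j ≤ l.length - 1 := Nat.find_min' hex (by
        have h9 : l.length - 1 + 1 = l.length := by omega
        rw [h9, List.take_length]
        exact hred)
      have hjlt : j < l.length := by omega
      have hredtake : cs.IsReduced (l.take j) := by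
        rcases Nat.eq_zero_or_pos j with h0 | h0
        · rw [h0, List.take_zero]
          show ℓ (πw []) = _
          simp
        · have h8 := Nat.find_min hex (show j - 1 < j by omega)
          rw [not_not] at h8
          have hj1 : j - 1 + 1 = j := by omega
          rwa [hj1] at h8
      set w0 := πw (l.take j) with hw0def
      set b := l[j] with hbdef
      have htake : l.take (j + 1) = l.take j ++ [b] := by
        rw [List.take_succ, List.getElem?_eq_getElem hjlt]
        rfl
      have hlen_take : (l.take j).length = j := by
        rw [List.length_take]
        omega
      have hπtake : πw (l.take (j + 1)) = w0 * σ b := by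
        rw [htake, cs.wordProd_append, cs.wordProd_singleton]
      have hlen_take1 : (l.take (j + 1)).length = j + 1 := by
        rw [List.length_take]
        omega
      have hne2 : ℓ (w0 * σ b) ≠ j + 1 := by
        intro h
        apply hj
        show ℓ (πw (l.take (j + 1))) = _
        rw [hπtake, h, hlen_take1]
      have hw0len : ℓ w0 = j := by
        have h7 := hredtake
        unfold CoxeterSystem.IsReduced at h7
        rw [hlen_take] at h7
        exact h7
      have hdesc : ℓ (w0 * σ b) < ℓ w0 := by
        rcases cs.length_mul_simple w0 b with h | h
        · exfalso
          apply hne2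
          rw [h, hw0len]
        · omega
      obtain ⟨k, hk, hkeq⟩ := exchange_right cs hdesc hredtake rfl
      rw [hlen_take] at hk
      set l'' := (l.take j).eraseIdx k ++ l.drop (j + 1) with hl''def
      have hπ'' : πw l'' = πw l := by
        rw [hl''def, cs.wordProd_append, ← hkeq, ← hπtake, ← cs.wordProd_append,
          List.take_append_drop]
      have hlen'' : l''.length ≤ n := by
        rw [hl''def, List.length_append, List.length_eraseIdx, hlen_take, if_pos hk,
          List.length_drop]
        omega
      obtain ⟨l', hsub, hred', hπ'⟩ := ih l'' hlen''
      refine ⟨l', ?_, hred', by rw [hπ', hπ'']⟩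
      intro x hx
      have hx2 := hsub x hx
      rw [hl''def] at hx2
      rcases List.mem_append.mp hx2 with h | h
      · exact (List.take_sublist j l).subset ((List.eraseIdx_sublist _ k).subset h)
      · exact (List.drop_sublist (j + 1) l).subset h

section Parabolic

variable (S' : Set B)

lemma wordProd_mem_parabolic {l : List B} (h : ∀ b ∈ l, b ∈ S') :
    πw l ∈ cs.parabolic S' := by
  induction l with
  | nil =>
    rw [cs.wordProd_nil]
    exact one_mem _
  | cons i l ih =>
    rw [cs.wordProd_cons]
    exact mul_mem (Subgroup.subset_closure ⟨i, h i (by simp), rfl⟩)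
      (ih fun b hb => h b (by simp [hb]))

lemma exists_word_of_mem_parabolic {u : W} (hu : u ∈ cs.parabolic S') :
    ∃ l : List B, (∀ b ∈ l, b ∈ S') ∧ u = πw l := by
  induction hu using Subgroup.closure_induction with
  | mem x hx =>
    obtain ⟨i, hi, rfl⟩ := hx
    exact ⟨[i], by simpa using hi, (cs.wordProd_singleton i).symm⟩
  | one => exact ⟨[], by simp, (cs.wordProd_nil).symm⟩
  | mul x y hx hy ihx ihy =>
    obtain ⟨l₁, h₁, rfl⟩ := ihx
    obtain ⟨l₂, h₂, rfl⟩ := ihy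
    refine ⟨l₁ ++ l₂, ?_, (cs.wordProd_append l₁ l₂).symm⟩
    intro b hb
    rcases List.mem_append.mp hb with h | h
    · exact h₁ b h
    · exact h₂ b h
  | inv x hx ihx =>
    obtain ⟨l, h₁, rfl⟩ := ihx
    refine ⟨l.reverse, ?_, (cs.wordProd_reverse l).symm⟩
    intro b hb
    exact h₁ b (List.mem_reverse.mp hb)

lemma parabolic_decomp {u : W} (hu : u ∈ cs.parabolic S') (hne : u ≠ 1) :
    ∃ s' ∈ S', ∃ u₁ ∈ cs.parabolic S', u = σ s' * u₁ ∧ ℓ u = ℓ u₁ + 1 := by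
  obtain ⟨l, hl, rfl⟩ := exists_word_of_mem_parabolic cs S' hu
  obtain ⟨l', hsub, hred', hπ'⟩ := exists_reduced_subword cs l
  have hl' : ∀ b ∈ l', b ∈ S' := fun b hb => hl b (hsub b hb)
  rcases l' with _ | ⟨b, t⟩
  · exfalso
    apply hne
    rw [← hπ']
    exact cs.wordProd_nil
  · have hb : b ∈ S' := hl' b (by simp)
    have ht : ∀ x ∈ t, x ∈ S' := fun x hx => hl' x (by simp [hx])
    have htred : cs.IsReduced t := by
      have h6 := CoxeterSystem.IsReduced.drop hred' 1
      simpa using h6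
    refine ⟨b, hb, πw t, wordProd_mem_parabolic cs S' ht, ?_, ?_⟩
    · rw [← hπ', cs.wordProd_cons]
    · rw [← hπ', cs.wordProd_cons]
      have h1 : ℓ (σ b * πw t) = (b :: t).length := by
        have h5 := hred'
        unfold CoxeterSystem.IsReduced at h5
        rw [cs.wordProd_cons] at h5
        exact h5
      have h2 : ℓ (πw t) = t.length := htred
      rw [h1, h2]
      simp

lemma length_parabolic_mul_of_isMinRep {x : W} (hx : cs.IsMinRep S' x) :
    ∀ u ∈ cs.parabolic S', ℓ (u * x) = ℓ u + ℓ x := by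
  suffices H : ∀ n, ∀ u ∈ cs.parabolic S', ℓ u = n → ℓ (u * x) = ℓ u + ℓ x by
    intro u hu
    exact H (ℓ u) u hu rfl
  intro n
  induction n using Nat.strong_induction_on with
  | _ n ih =>
    intro u hu hlu
    by_cases hone : u = 1
    · subst hone
      simp
    obtain ⟨s', hs', u₁, hu₁, rfl, hlen⟩ := parabolic_decomp cs S' hu hone
    have ihu₁ : ℓ (u₁ * x) = ℓ u₁ + ℓ x := by
      refine ih (ℓ u₁) (by omega) u₁ hu₁ rfl
    rcases cs.length_simple_mul (u₁ * x) s' with h | h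
    · rw [mul_assoc, h, ihu₁]
      omega
    · exfalso
      have hdesc : ℓ (σ s' * (u₁ * x)) < ℓ (u₁ * x) := by omega
      obtain ⟨l₁, hred₁, hπ₁⟩ := cs.exists_reduced_word' u₁
      obtain ⟨l₂, hred₂, hπ₂⟩ := cs.exists_reduced_word' x
      have e1 : ℓ u₁ = l₁.length := by rw [hπ₁]; exact hred₁
      have e2 : ℓ x = l₂.length := by rw [hπ₂]; exact hred₂
      have hred12 : cs.IsReduced (l₁ ++ l₂) := by
        show ℓ (πw (l₁ ++ l₂)) = _
        rw [cs.wordProd_append, ← hπ₁, ← hπ₂, ihu₁, List.length_append]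
        omega
      have hπ12 : u₁ * x = πw (l₁ ++ l₂) := by
        rw [cs.wordProd_append, ← hπ₁, ← hπ₂]
      obtain ⟨k, hk, hkeq⟩ := exchange_left cs hdesc hred12 hπ12
      rw [List.length_append] at hk
      by_cases hkl : k < l₁.length
      · rw [List.eraseIdx_append_of_lt_length hkl] at hkeq
        rw [cs.wordProd_append, ← hπ₂] at hkeq
        have hcan : σ s' * u₁ = πw (l₁.eraseIdx k) := by
          have h3 := hkeq
          rw [← mul_assoc] at h3
          exact mul_right_cancel h3
        have hle : ℓ (σ s' * u₁) ≤ (l₁.eraseIdx k).length := by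
          rw [hcan]
          exact cs.length_wordProd_le _
        rw [List.length_eraseIdx, if_pos hkl] at hle
        omega
      · push_neg at hkl
        rw [List.eraseIdx_append_of_length_le hkl] at hkeq
        rw [cs.wordProd_append, ← hπ₁] at hkeq
        set xh := πw (l₂.eraseIdx (k - l₁.length)) with hxh
        have hconj : (u₁⁻¹ * σ s' * u₁) * x = xh := by
          calc (u₁⁻¹ * σ s' * u₁) * x = u₁⁻¹ * (σ s' * (u₁ * x)) := by group
            _ = u₁⁻¹ * (u₁ * xh) := by rw [hkeq]
            _ = xh := by group
        have hmem : u₁⁻¹ * σ s' * u₁ ∈ cs.parabolic S' :=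
          mul_mem (mul_mem (inv_mem hu₁) (Subgroup.subset_closure ⟨s', hs', rfl⟩)) hu₁
        have hge := hx _ hmem
        rw [hconj] at hge
        have hle : ℓ xh ≤ (l₂.eraseIdx (k - l₁.length)).length := by
          rw [hxh]
          exact cs.length_wordProd_le _
        have hkl2 : k - l₁.length < l₂.length := by omega
        rw [List.length_eraseIdx, if_pos hkl2] at hle
        omega

lemma exists_parabolic_mul_isMinRep (x : W) :
    ∃ u ∈ cs.parabolic S', cs.IsMinRep S' (u * x) := by
  have hne : ∃ n, ∃ u ∈ cs.parabolic S', ℓ (u * x) = n := ⟨ℓ x, 1, one_mem _, by simp⟩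
  obtain ⟨u, hu, hlu⟩ := Nat.find_spec hne
  refine ⟨u, hu, ?_⟩
  intro v hv
  rw [← mul_assoc]
  have h2 : Nat.find hne ≤ ℓ ((v * u) * x) :=
    Nat.find_min' hne ⟨v * u, mul_mem hv hu, rfl⟩
  omega

lemma exists_simple_descent_of_not_isMinRep {z : W} (h : ¬ cs.IsMinRep S' z) :
    ∃ s' ∈ S', ℓ (σ s' * z) < ℓ z := by
  by_contra hno
  push_neg at hno
  apply h
  obtain ⟨u₀, hu₀, hymin⟩ := exists_parabolic_mul_isMinRep cs S' z
  set y := u₀ * z with hydef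
  have hz : z = u₀⁻¹ * y := by rw [hydef]; group
  have hmemu : u₀⁻¹ ∈ cs.parabolic S' := inv_mem hu₀
  have hadd := length_parabolic_mul_of_isMinRep cs S' hymin u₀⁻¹ hmemu
  by_cases h1 : u₀⁻¹ = 1
  · have h2 : u₀ = 1 := by
      rw [← inv_inv u₀, h1, inv_one]
    rw [h2, one_mul] at hydef
    rw [hydef] at hymin
    exact hymin
  · exfalso
    obtain ⟨s', hs', u₁, hu₁, hdec, hlen⟩ := parabolic_decomp cs S' hmemu h1
    have h2 : σ s' * z = u₁ * y := by
      rw [hz, hdec, mul_assoc (σ s') u₁ y, cs.simple_mul_simple_cancel_left]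
    have h3 : ℓ (u₁ * y) = ℓ u₁ + ℓ y := length_parabolic_mul_of_isMinRep cs S' hymin u₁ hu₁
    have h4 := hno s' hs'
    rw [h2, h3] at h4
    have h5 : ℓ z = ℓ u₀⁻¹ + ℓ y := by rw [hz]; exact hadd
    omega

lemma deodhar {x : W} (hx : cs.IsMinRep S' x) (i : B) :
    cs.IsMinRep S' (x * σ i) ∨ ∃ s' ∈ S', x * σ i = σ s' * x := by
  rcases cs.length_mul_simple x i with hup | hdown
  · by_cases hm : cs.IsMinRep S' (x * σ i)
    · exact Or.inl hm
    · right
      obtain ⟨s', hs', hdesc⟩ := exists_simple_descent_of_not_isMinRep cs S' hm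
      refine ⟨s', hs', ?_⟩
      have hs'mem : σ s' ∈ cs.parabolic S' := Subgroup.subset_closure ⟨s', hs', rfl⟩
      have h1 : ℓ (σ s' * x) = ℓ x + 1 := by
        have hge := hx (σ s') hs'mem
        rcases cs.length_simple_mul x s' with h | h
        · exact h
        · omega
      obtain ⟨ωx, hredx, hπx⟩ := cs.exists_reduced_word' x
      have hlx : ℓ x = ωx.length := by rw [hπx]; exact hredx
      have hred : cs.IsReduced (s' :: ωx) := by
        show ℓ (πw (s' :: ωx)) = _
        rw [cs.wordProd_cons, ← hπx, h1, List.length_cons, hlx]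
      have hπc : σ s' * x = πw (s' :: ωx) := by rw [cs.wordProd_cons, hπx]
      have hdesc2 : ℓ ((σ s' * x) * σ i) < ℓ (σ s' * x) := by
        rw [mul_assoc, h1]
        omega
      obtain ⟨j, hj, hjeq⟩ := exchange_right cs hdesc2 hred hπc
      rcases j with _ | k
      · have h6 : (σ s' * x) * σ i = πw ωx := by
          rw [hjeq]
          rfl
        rw [← hπx] at h6
        have h9 : σ s' * (σ s' * x) = x := cs.simple_mul_simple_cancel_left s'
        have h10 := congrArg (fun z => σ s' * z) h6
        rw [show σ s' * ((σ s' * x) * σ i) = (σ s' * (σ s' * x)) * σ i by group, h9] at h10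
        exact h10
      · exfalso
        have h6 : (σ s' * x) * σ i = πw (s' :: ωx.eraseIdx k) := by
          rw [hjeq]
          rfl
        rw [cs.wordProd_cons, mul_assoc] at h6
        have h7 : x * σ i = πw (ωx.eraseIdx k) := mul_left_cancel h6
        have h8 : ℓ (x * σ i) ≤ (ωx.eraseIdx k).length := by
          rw [h7]
          exact cs.length_wordProd_le _
        have hk : k < ωx.length := by
          have h9 := hj
          simp only [List.length_cons] at h9
          omega
        rw [List.length_eraseIdx, if_pos hk] at h8
        omega
  · left
    intro u hu
    have h1 := hx u hu
    have h2 : ℓ (u * x) ≤ ℓ (u * (x * σ i)) + 1 := by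
      have h3 := cs.length_mul_le (u * (x * σ i)) (σ i)
      have e : (u * (x * σ i)) * σ i = u * x := by
        rw [mul_assoc u (x * σ i) (σ i), mul_assoc x (σ i) (σ i),
          cs.simple_mul_simple_self, mul_one]
      rw [e, cs.length_simple] at h3
      exact h3
    omega

lemma minrep_contra {x y : W} (hx : cs.IsMinRep S' x) (hy : cs.IsMinRep S' y) {s' : B}
    (hs' : s' ∈ S') (h1 : x = σ s' * y) (i : B) (h2 : x = y * σ i) : False := by
  have hs'mem : σ s' ∈ cs.parabolic S' := Subgroup.subset_closure ⟨s', hs', rfl⟩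
  have l1 : ℓ y ≤ ℓ x := by
    rw [h1]
    exact hy _ hs'mem
  have h3 : σ s' * x = y := by rw [h1, cs.simple_mul_simple_cancel_left]
  have l2 : ℓ x ≤ ℓ y := by
    rw [← h3]
    exact hx _ hs'mem
  have h4 := cs.length_mul_simple_ne y i
  rw [← h2] at h4
  omega

end Parabolic


end CoxAux

/-- The induced module `𝒮(𝐑')⊗_{𝐇'}𝐇`, with basis `{m ⊗ H_x : x ∈ (W'\W)_short}`,
realized as finitely supported functions from the shortest coset representatives to the
cell module `V`.  The right `𝐇`-action of each generator `H_s` on basis vectors is the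
one described in the paper.  If `⟨·,·⟩` is a symmetric, non-degenerate, `𝐇'`-invariant
bilinear form on `V`, then the form `(m ⊗ H_x, n ⊗ H_y) = δ_{x,y}⟨m,n⟩` is a
symmetric, non-degenerate, `𝐇`-invariant bilinear form on the induced module. -/
theorem induced_cell_module_bilinear_form {B W : Type*} [Group W] (M : CoxeterMatrix B)
    (cs : CoxeterSystem M W) (S' : Set B)
    {V : Type*} [AddCommGroup V] [Module (LaurentPolynomial ℤ) V]
    -- the `𝐇'`-invariant form on the cell module `𝒮(𝐑')`, with the action of the
    -- generators `H_{s'}`, `s' ∈ S'`, given by `actV`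
    (bf : V →ₗ[LaurentPolynomial ℤ] V →ₗ[LaurentPolynomial ℤ] LaurentPolynomial ℤ)
    (actV : B → (V →ₗ[LaurentPolynomial ℤ] V))
    (hbfsymm : ∀ m n : V, bf m n = bf n m)
    (hbfnondeg : ∀ m : V, (∀ n : V, bf m n = 0) → m = 0)
    (hbfinv : ∀ s' ∈ S', ∀ m n : V, bf (actV s' m) n = bf m (actV s' n))
    -- the induced module and the action of the generators `H_s`, `s ∈ S`, on it
    (act : B → ((({x : W // cs.IsMinRep S' x} →₀ V)) →ₗ[LaurentPolynomial ℤ]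
      ({x : W // cs.IsMinRep S' x} →₀ V)))
    (hA : ∀ (x y : {x : W // cs.IsMinRep S' x}) (s : B),
      (y : W) = (x : W) * cs.simple s →
      cs.length (y : W) = cs.length (x : W) + 1 →
      ∀ m : V, act s (Finsupp.single x m) = Finsupp.single y m)
    (hB : ∀ (x y : {x : W // cs.IsMinRep S' x}) (s : B),
      (y : W) = (x : W) * cs.simple s →
      cs.length (x : W) = cs.length (y : W) + 1 →
      ∀ m : V, act s (Finsupp.single x m) =
        Finsupp.single y m +
          ((T (-1) - T 1 : LaurentPolynomial ℤ)) • Finsupp.single x m)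
    (hC : ∀ (x : {x : W // cs.IsMinRep S' x}) (s : B) (s' : B), s' ∈ S' →
      (x : W) * cs.simple s = cs.simple s' * (x : W) →
      ∀ m : V, act s (Finsupp.single x m) = Finsupp.single x (actV s' m))
    -- the bilinear form `(m ⊗ H_x, n ⊗ H_y) = δ_{x,y}·⟨m,n⟩`
    (Bf : ({x : W // cs.IsMinRep S' x} →₀ V) →ₗ[LaurentPolynomial ℤ]
      ({x : W // cs.IsMinRep S' x} →₀ V) →ₗ[LaurentPolynomial ℤ] LaurentPolynomial ℤ)
    (hBf : ∀ (x y : {x : W // cs.IsMinRep S' x}) (m n : V), ∀ _ : Decidable (x = y),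
      Bf (Finsupp.single x m) (Finsupp.single y n) = if x = y then bf m n else 0) :
    (∀ a b, Bf a b = Bf b a) ∧
    (∀ a, (∀ b, Bf a b = 0) → a = 0) ∧
    (∀ (s : B) a b, Bf (act s a) b = Bf a (act s b)) := by
  classical
  -- extension of equalities of bilinear forms from basis vectors
  have key : ∀ (L₁ L₂ : ({x : W // cs.IsMinRep S' x} →₀ V) →ₗ[LaurentPolynomial ℤ]
      ({x : W // cs.IsMinRep S' x} →₀ V) →ₗ[LaurentPolynomial ℤ] LaurentPolynomial ℤ),
      (∀ x m y n, L₁ (Finsupp.single x m) (Finsupp.single y n)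
        = L₂ (Finsupp.single x m) (Finsupp.single y n)) → ∀ a b, L₁ a b = L₂ a b := by
    intro L₁ L₂ h a
    induction a using Finsupp.induction_linear with
    | zero => intro b; simp
    | add f g hf hg =>
      intro b
      rw [map_add, map_add]
      simp only [LinearMap.add_apply]
      rw [hf b, hg b]
    | single x m =>
      intro b
      induction b using Finsupp.induction_linear with
      | zero => simp
      | add f g hf hg => rw [map_add, map_add, hf, hg]
      | single y n => exact h x m y n
  -- symmetry
  have hsymm : ∀ a b, Bf a b = Bf b a := by
    intro a b
    have h := key Bf Bf.flip ?_ a b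
    · rwa [LinearMap.flip_apply] at h
    · intro x m y n
      rw [LinearMap.flip_apply, hBf x y m n (Classical.dec _), hBf y x n m (Classical.dec _)]
      by_cases hxy : x = y
      · subst hxy
        rw [if_pos rfl, if_pos rfl, hbfsymm]
      · rw [if_neg hxy, if_neg (Ne.symm hxy)]
  refine ⟨hsymm, ?_, ?_⟩
  · -- non-degeneracy
    intro a ha
    have hval : ∀ (x : {x : W // cs.IsMinRep S' x}) (n : V),
        Bf a (Finsupp.single x n) = bf (a x) n := by
      clear ha
      induction a using Finsupp.induction_linear with
      | zero => intro x n; simp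
      | add f g hf hg =>
        intro x n
        rw [map_add]
        simp only [LinearMap.add_apply]
        rw [hf x n, hg x n, Finsupp.add_apply, map_add]
        simp only [LinearMap.add_apply]
      | single y m =>
        intro x n
        rw [hBf y x m n (Classical.dec _), Finsupp.single_apply]
        by_cases h : y = x
        · rw [if_pos h, if_pos h]
        · rw [if_neg h, if_neg h, map_zero, LinearMap.zero_apply]
    refine Finsupp.ext fun x => ?_
    have h0 : ∀ n, bf (a x) n = 0 := fun n => by rw [← hval x n]; exact ha _
    rw [Finsupp.coe_zero, Pi.zero_apply]
    exact hbfnondeg _ h0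
  · -- invariance
    intro i a b
    -- evaluation of the left-hand side on distinct basis vectors
    have act_eval : ∀ (x y : {x : W // cs.IsMinRep S' x}), x ≠ y → ∀ (m n : V),
        Bf (act i (Finsupp.single x m)) (Finsupp.single y n) =
          if (x : W) * cs.simple i = (y : W) then bf m n else 0 := by
      intro x y hxy m n
      rcases CoxAux.deodhar cs S' x.2 i with hmin | ⟨s', hs', hcomm⟩
      · set x₁ : {x : W // cs.IsMinRep S' x} := ⟨(x : W) * cs.simple i, hmin⟩ with hx₁
        have hcoe : (x₁ : W) = (x : W) * cs.simple i := rfl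
        have hcondiff : (x₁ = y) ↔ ((x : W) * cs.simple i = (y : W)) := by
          rw [Subtype.ext_iff, hcoe]
        rcases cs.length_mul_simple (x : W) i with hup | hdown
        · rw [hA x x₁ i rfl hup m, hBf x₁ y m n (Classical.dec _)]
          by_cases h : x₁ = y
          · rw [if_pos h, if_pos (hcondiff.mp h)]
          · rw [if_neg h, if_neg (fun hc => h (hcondiff.mpr hc))]
        · have hdown' : cs.length (x : W) = cs.length (x₁ : W) + 1 := by
            rw [hcoe]
            omega
          rw [hB x x₁ i rfl hdown' m, map_add, map_smul]
          simp only [LinearMap.add_apply, LinearMap.smul_apply]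
          rw [hBf x₁ y m n (Classical.dec _), hBf x y m n (Classical.dec _), if_neg hxy]
          simp only [smul_zero, add_zero]
          by_cases h : x₁ = y
          · rw [if_pos h, if_pos (hcondiff.mp h)]
          · rw [if_neg h, if_neg (fun hc => h (hcondiff.mpr hc))]
      · rw [hC x i s' hs' hcomm m, hBf x y _ n (Classical.dec _), if_neg hxy]
        have hfalse : ¬ ((x : W) * cs.simple i = (y : W)) := by
          intro h
          exact CoxAux.minrep_contra cs S' y.2 x.2 hs' (by rw [← h, hcomm]) i h.symm
        rw [if_neg hfalse]
    -- reduce to basis vectors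
    have hmain : ∀ (x : {x : W // cs.IsMinRep S' x}) (m : V)
        (y : {x : W // cs.IsMinRep S' x}) (n : V),
        Bf (act i (Finsupp.single x m)) (Finsupp.single y n) =
          Bf (Finsupp.single x m) (act i (Finsupp.single y n)) := by
      intro x m y n
      by_cases hxy : x = y
      · subst hxy
        rcases CoxAux.deodhar cs S' x.2 i with hmin | ⟨s', hs', hcomm⟩
        · set x₁ : {x : W // cs.IsMinRep S' x} := ⟨(x : W) * cs.simple i, hmin⟩ with hx₁
          have hcoe : (x₁ : W) = (x : W) * cs.simple i := rfl
          have hne : x₁ ≠ x := by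
            intro h
            have h2 : (x : W) * cs.simple i = (x : W) := by
              rw [← hcoe, h]
            exact cs.length_mul_simple_ne (x : W) i (by rw [h2])
          rcases cs.length_mul_simple (x : W) i with hup | hdown
          · rw [hA x x₁ i rfl hup m, hA x x₁ i rfl hup n]
            rw [hBf x₁ x m n (Classical.dec _), hBf x x₁ m n (Classical.dec _)]
            rw [if_neg hne, if_neg (Ne.symm hne)]
          · have hdown' : cs.length (x : W) = cs.length (x₁ : W) + 1 := by
              rw [hcoe]
              omega
            rw [hB x x₁ i rfl hdown' m, hB x x₁ i rfl hdown' n]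
            rw [map_add, map_smul]
            simp only [LinearMap.add_apply, LinearMap.smul_apply]
            rw [map_add, map_smul]
            rw [hBf x₁ x m n (Classical.dec _), hBf x x m n (Classical.dec _),
              hBf x x₁ m n (Classical.dec _)]
            rw [if_neg hne, if_neg (Ne.symm hne), if_pos rfl]
        · rw [hC x i s' hs' hcomm m, hC x i s' hs' hcomm n]
          rw [hBf x x _ _ (Classical.dec _), hBf x x _ _ (Classical.dec _),
            if_pos rfl, if_pos rfl]
          exact hbfinv s' hs' m n
      · rw [act_eval x y hxy m n, hsymm (Finsupp.single x m) (act i (Finsupp.single y n)),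
          act_eval y x (Ne.symm hxy) n m]
        by_cases hcond : (x : W) * cs.simple i = (y : W)
        · have hcond2 : (y : W) * cs.simple i = (x : W) := by
            rw [← hcond, mul_assoc, cs.simple_mul_simple_self, mul_one]
          rw [if_pos hcond, if_pos hcond2, hbfsymm]
        · have hcond2 : ¬ ((y : W) * cs.simple i = (x : W)) := by
            intro h
            apply hcond
            rw [← h, mul_assoc, cs.simple_mul_simple_self, mul_one]
          rw [if_neg hcond, if_neg hcond2]
    exact key (Bf.comp (act i)) (Bf.compl₂ (act i))
      (fun x m y n => by
        rw [LinearMap.comp_apply, LinearMap.compl₂_apply]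
        exact hmain x m y n) a b
end
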